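/- arXiv:2103.16878 — 2 statements merged into one kernel-verified Lean document; each statement's English description precedes it below -/
import Mathlib

section
/- Let n ≥ 1, let Λ = diag(λ₁,…,λₙ) be a diagonal complex n×n matrix with pairwise distinct diagonal entries, let D be a diagonal complex n×n matrix, let R be a complex n×n matrix with zero diagonal entries, and set A'' = ΛR − RΛ. Then there exists a unique sequence (P_j)_{j≥0} of complex n×n matrices with P₀ = Iₙ satisfying, for every j ≥ 0, the recursion ΛP_{j+1} − P_{j+1}Λ = jP_j + A''P_j + (DP_j − P_jD). Moreover, for this sequence the off-diagonal part of P₁ equals R, and for every j ≥ 0 the diagonal part of P_{j+1} equals −1/(j+1) times the diagonal part of A''·(P_{j+1} − diag(P_{j+1})). -/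
/-!
Write `ad X = Λ X - X Λ`. Since `(ad X)ᵢₖ = (λᵢ - λₖ) Xᵢₖ` with the `λᵢ` distinct, `ad` kills
exactly the diagonal matrices and is invertible on matrices of zero diagonal, and `ad X` always
has zero diagonal. So the recursion fixes the off-diagonal part of `P (j+1)` from `P j`, while
its diagonal part is fixed by the solvability of the next step: the diagonal of the right-hand
side at step `j+1` is `(j+1) P (j+1) + A'' P (j+1)`, and because `A''` has zero diagonal the
second term only involves the off-diagonal part of `P (j+1)`. Defining the sequence this way
gives existence; uniqueness and the two formulas come from the same two observations.
-/

open Matrix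

/-- The diagonal part of a square matrix: the diagonal matrix with the same diagonal. -/
noncomputable def diagPart {n : ℕ} (M : Matrix (Fin n) (Fin n) ℂ) :
    Matrix (Fin n) (Fin n) ℂ :=
  Matrix.diagonal (fun i => M i i)

variable {ι α : Type*}

section CommRing

variable [Fintype ι] [DecidableEq ι] [CommRing α]

theorem diagonal_mul_sub_mul_diagonal_apply (lam : ι → α) (X : Matrix ι ι α) (i k : ι) :
    (diagonal lam * X - X * diagonal lam) i k = (lam i - lam k) * X i k := by
  simp only [Matrix.sub_apply, diagonal_mul, mul_diagonal]
  ring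

theorem mul_sub_diagonal_apply_self {A : Matrix ι ι α} (hA : ∀ i, A i i = 0)
    (X : Matrix ι ι α) (v : ι → α) (i : ι) :
    (A * (X - diagonal v)) i i = (A * X) i i := by
  simp [Matrix.mul_sub, hA i]

theorem recursion_rhs_apply_self (c : α) (A P : Matrix ι ι α) (d : ι → α) (i : ι) :
    (c • P + A * P + (diagonal d * P - P * diagonal d)) i i = c * P i i + (A * P) i i := by
  simp [Matrix.sub_apply, diagonal_mul, mul_diagonal, mul_comm]

end CommRing

section Field

variable [Field α]

/-- The inverse of `X ↦ diagonal lam * X - X * diagonal lam` on matrices of zero diagonal;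
its own diagonal is zero because `x / 0 = 0`. -/
noncomputable def offDiagSolve (lam : ι → α) (Q : Matrix ι ι α) : Matrix ι ι α :=
  of fun i k => Q i k / (lam i - lam k)

theorem offDiagSolve_apply_self (lam : ι → α) (Q : Matrix ι ι α) (i : ι) :
    offDiagSolve lam Q i i = 0 := by
  simp [offDiagSolve]

variable [Fintype ι] [DecidableEq ι]

theorem sub_diagonal_diag_eq_of_commutator_eq {lam : ι → α} (hlam : Function.Injective lam)
    {X Y : Matrix ι ι α}
    (h : diagonal lam * X - X * diagonal lam = diagonal lam * Y - Y * diagonal lam) :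
    X - diagonal X.diag = Y - diagonal Y.diag := by
  ext i k
  rcases eq_or_ne i k with rfl | hik
  · simp
  · have hik' := congrFun (congrFun h i) k
    rw [diagonal_mul_sub_mul_diagonal_apply, diagonal_mul_sub_mul_diagonal_apply] at hik'
    simp [diagonal_apply_ne _ hik, mul_left_cancel₀ (sub_ne_zero.2 (hlam.ne hik)) hik']

theorem commutator_offDiagSolve_sub_diagonal {lam : ι → α} (hlam : Function.Injective lam)
    {Q : Matrix ι ι α} (hQ : ∀ i, Q i i = 0) (v : ι → α) :
    diagonal lam * (offDiagSolve lam Q - diagonal v) -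
      (offDiagSolve lam Q - diagonal v) * diagonal lam = Q := by
  ext i k
  rw [diagonal_mul_sub_mul_diagonal_apply]
  rcases eq_or_ne i k with rfl | hik
  · simp [hQ]
  · have hlam_ik := sub_ne_zero.2 (hlam.ne hik)
    simp only [offDiagSolve, Matrix.sub_apply, of_apply, diagonal_apply_ne _ hik, sub_zero]
    field_simp

def IsSolution (Λ A D : Matrix ι ι α) (P : ℕ → Matrix ι ι α) : Prop :=
  P 0 = 1 ∧ ∀ j : ℕ,
    Λ * P (j + 1) - P (j + 1) * Λ = (j : α) • P j + A * P j + (D * P j - P j * D)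

variable [CharZero α] {lam d : ι → α} {A : Matrix ι ι α}

theorem IsSolution.diagonal_diag_succ (hA : ∀ i, A i i = 0) {P : ℕ → Matrix ι ι α}
    (hP : IsSolution (diagonal lam) A (diagonal d) P) (j : ℕ) :
    diagonal (P (j + 1)).diag =
      (-1 / ((j : α) + 1)) • diagonal (A * (P (j + 1) - diagonal (P (j + 1)).diag)).diag := by
  have hj : (j : α) + 1 ≠ 0 := Nat.cast_add_one_ne_zero j
  ext i k
  rcases eq_or_ne i k with rfl | hik
  · have hstep := congrFun (congrFun (hP.2 (j + 1)) i) i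
    rw [diagonal_mul_sub_mul_diagonal_apply, sub_self, zero_mul, recursion_rhs_apply_self]
      at hstep
    simp only [diagonal_apply_eq, diag_apply, Matrix.smul_apply, smul_eq_mul,
      mul_sub_diagonal_apply_self hA]
    push_cast at hstep
    rw [div_mul_eq_mul_div, eq_div_iff hj]
    linear_combination -hstep
  · simp [diagonal_apply_ne _ hik]

theorem IsSolution.unique (hlam : Function.Injective lam) (hA : ∀ i, A i i = 0)
    {P Q : ℕ → Matrix ι ι α} (hP : IsSolution (diagonal lam) A (diagonal d) P)
    (hQ : IsSolution (diagonal lam) A (diagonal d) Q) : P = Q := by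
  funext j
  induction j with
  | zero => rw [hP.1, hQ.1]
  | succ j ih =>
    have hoff : P (j + 1) - diagonal (P (j + 1)).diag = Q (j + 1) - diagonal (Q (j + 1)).diag :=
      sub_diagonal_diag_eq_of_commutator_eq hlam (by rw [hP.2, hQ.2, ih])
    have hdiag : diagonal (P (j + 1)).diag = diagonal (Q (j + 1)).diag := by
      rw [hP.diagonal_diag_succ hA, hQ.diagonal_diag_succ hA, hoff]
    rw [← sub_add_cancel (P (j + 1)) (diagonal (P (j + 1)).diag), hoff, hdiag, sub_add_cancel]

/-- The term after `P j` when the right-hand side of the recursion at step `j` is `Q`. -/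
noncomputable def nextTerm (lam : ι → α) (A : Matrix ι ι α) (j : ℕ) (Q : Matrix ι ι α) :
    Matrix ι ι α :=
  offDiagSolve lam Q - diagonal fun i => (A * offDiagSolve lam Q) i i / ((j : α) + 1)

theorem nextTerm_compat (hA : ∀ i, A i i = 0) (j : ℕ) (Q : Matrix ι ι α) (i : ι) :
    ((j : α) + 1) * nextTerm lam A j Q i i + (A * nextTerm lam A j Q) i i = 0 := by
  have hj : (j : α) + 1 ≠ 0 := Nat.cast_add_one_ne_zero j
  rw [nextTerm, mul_sub_diagonal_apply_self hA, Matrix.sub_apply, offDiagSolve_apply_self,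
    diagonal_apply_eq]
  field_simp
  ring

noncomputable def recursionSolution (lam d : ι → α) (A : Matrix ι ι α) : ℕ → Matrix ι ι α
  | 0 => 1
  | j + 1 =>
    let P := recursionSolution lam d A j
    nextTerm lam A j ((j : α) • P + A * P + (diagonal d * P - P * diagonal d))

theorem isSolution_recursionSolution (hlam : Function.Injective lam) (hA : ∀ i, A i i = 0) :
    IsSolution (diagonal lam) A (diagonal d) (recursionSolution lam d A) := by
  refine ⟨rfl, fun j => commutator_offDiagSolve_sub_diagonal hlam (fun i => ?_) _⟩
  rw [recursion_rhs_apply_self]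
  cases j with
  | zero => simp [recursionSolution, hA]
  | succ j =>
    push_cast
    exact nextTerm_compat hA j _ i

end Field

theorem stmt3_general (n : ℕ) (lam : Fin n → ℂ) (hlam : Function.Injective lam)
    (d : Fin n → ℂ) (R : Matrix (Fin n) (Fin n) ℂ) (hR : ∀ i, R i i = 0)
    (Λ D A'' : Matrix (Fin n) (Fin n) ℂ)
    (hΛ : Λ = Matrix.diagonal lam) (hD : D = Matrix.diagonal d)
    (hA : A'' = Λ * R - R * Λ) :
    (∃! P : ℕ → Matrix (Fin n) (Fin n) ℂ,
      P 0 = 1 ∧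
      ∀ j : ℕ, Λ * P (j + 1) - P (j + 1) * Λ =
        (j : ℂ) • P j + A'' * P j + (D * P j - P j * D)) ∧
    (∀ P : ℕ → Matrix (Fin n) (Fin n) ℂ,
      P 0 = 1 →
      (∀ j : ℕ, Λ * P (j + 1) - P (j + 1) * Λ =
        (j : ℂ) • P j + A'' * P j + (D * P j - P j * D)) →
      (P 1 - diagPart (P 1) = R ∧
       ∀ j : ℕ, diagPart (P (j + 1)) =
        (-(1 : ℂ) / ((j : ℂ) + 1)) • diagPart (A'' * (P (j + 1) - diagPart (P (j + 1)))))) := by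
  subst hΛ hD hA
  have hA : ∀ i, (diagonal lam * R - R * diagonal lam) i i = 0 := fun i => by
    rw [diagonal_mul_sub_mul_diagonal_apply, sub_self, zero_mul]
  have hsol := isSolution_recursionSolution (d := d) hlam hA
  refine ⟨⟨_, hsol, fun P (hP : IsSolution _ _ _ P) => hP.unique hlam hA hsol⟩,
    fun P hP0 hrec => ?_⟩
  have hP : IsSolution _ _ _ P := ⟨hP0, hrec⟩
  refine ⟨?_, hP.diagonal_diag_succ hA⟩
  calc P 1 - diagPart (P 1) = R - diagonal R.diag :=
        sub_diagonal_diag_eq_of_commutator_eq hlam (by simpa [hP0] using hrec 0)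
    _ = R := by rw [diagonal_eq_zero.2 (show R.diag = 0 from funext hR), sub_zero]

/-- The recursion `[Λ, P (j+1)] = j • P j + A'' * P j + [D, P j]`, with `Λ` diagonal with
pairwise distinct entries, `D` diagonal, `R` of zero diagonal and `A'' = [Λ, R]`, has a
unique solution `(P j)` with `P 0 = 1`; moreover the off-diagonal part of `P 1` is `R`
and the diagonal part of `P (j+1)` is `-1/(j+1)` times the diagonal part of
`A'' * (offdiagonal part of P (j+1))`. -/
theorem stmt3 (n : ℕ) (hn : 1 ≤ n) (lam : Fin n → ℂ) (hlam : Function.Injective lam)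
    (d : Fin n → ℂ) (R : Matrix (Fin n) (Fin n) ℂ) (hR : ∀ i, R i i = 0)
    (Λ D A'' : Matrix (Fin n) (Fin n) ℂ)
    (hΛ : Λ = Matrix.diagonal lam) (hD : D = Matrix.diagonal d)
    (hA : A'' = Λ * R - R * Λ) :
    (∃! P : ℕ → Matrix (Fin n) (Fin n) ℂ,
      P 0 = 1 ∧
      ∀ j : ℕ, Λ * P (j + 1) - P (j + 1) * Λ =
        (j : ℂ) • P j + A'' * P j + (D * P j - P j * D)) ∧
    (∀ P : ℕ → Matrix (Fin n) (Fin n) ℂ,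
      P 0 = 1 →
      (∀ j : ℕ, Λ * P (j + 1) - P (j + 1) * Λ =
        (j : ℂ) • P j + A'' * P j + (D * P j - P j * D)) →
      (P 1 - diagPart (P 1) = R ∧
       ∀ j : ℕ, diagPart (P (j + 1)) =
        (-(1 : ℂ) / ((j : ℂ) + 1)) • diagPart (A'' * (P (j + 1) - diagPart (P (j + 1)))))) :=
  stmt3_general n lam hlam d R hR Λ D A'' hΛ hD hA
end

section
/- Let n ≥ 1, let U ⊆ ℂⁿ be an open set, let R : U → Mₙ(ℂ) be holomorphic with zero diagonal entries at every point, let D ∈ Mₙ(ℂ) be a constant diagonal matrix, and write Λ(u) = diag(u₁,…,uₙ). For (u,z) ∈ U × (ℂ ∖ {0}) define A(u,z) = Λ(u)/z² + ([Λ(u),R(u)] + D)/z and, for i ∈ {1,…,n}, Ω_i(u,z) = −E_i/z − [E_i,R(u)]. Then the zero-curvature equations ∂A/∂u_i − ∂Ω_i/∂z + Ω_iA − AΩ_i = 0 (for all i) and ∂Ω_j/∂u_i − ∂Ω_i/∂u_j + Ω_iΩ_j − Ω_jΩ_i = 0 (for all i,j) hold at every point of U × (ℂ ∖ {0}) if and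 only if R satisfies the isomonodromy system on U: for all i,j ∈ {1,…,n} and all u ∈ U, ∂/∂u_i [Λ(u),R(u)] = −[ [Λ(u),R(u)] + D , [E_i,R(u)] ] and ∂/∂u_i [E_j,R(u)] − ∂/∂u_j [E_i,R(u)] = [ [E_i,R(u)] , [E_j,R(u)] ]. -/
open Matrix

/-- The partial derivative `∂f/∂uᵢ` of a matrix-valued function on `ℂⁿ`,
taken entrywise. -/
noncomputable def matrixPderiv {n : ℕ} (i : Fin n)
    (f : (Fin n → ℂ) → Matrix (Fin n) (Fin n) ℂ) (u : Fin n → ℂ) :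
    Matrix (Fin n) (Fin n) ℂ :=
  Matrix.of fun a b => fderiv ℂ (fun v => f v a b) u (Pi.single i 1)

/-- The derivative `∂g/∂z` of a matrix-valued function of one complex variable,
taken entrywise. -/
noncomputable def matrixZderiv {n : ℕ} (g : ℂ → Matrix (Fin n) (Fin n) ℂ) (z : ℂ) :
    Matrix (Fin n) (Fin n) ℂ :=
  Matrix.of fun a b => deriv (fun w => g w a b) z

/-!
Both curvature components are Laurent polynomials in `z`. Since `Λ(u)`, `D` and the `Eᵢ` are
diagonal they commute with each other, so by the Jacobi identity the `z⁻³` and `z⁻²` terms of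
`[Ωᵢ, A]` vanish, while the `z⁻²` term `Eᵢ/z²` of `∂A/∂uᵢ` cancels `∂Ωᵢ/∂z`. What is left is
`z⁻¹ (∂ᵢ[Λ,R] + [[Λ,R] + D, [Eᵢ,R]])` for the first equation and the `z`-independent
`-(∂ᵢ[Eⱼ,R] - ∂ⱼ[Eᵢ,R]) + [[Eᵢ,R],[Eⱼ,R]]` for the second, and these vanish for all `z ≠ 0`
exactly when the isomonodromy system holds.
-/

section Bracket

variable {𝕜 M : Type*} [Field 𝕜] [Ring M] [Algebra 𝕜 M]

theorem commutator_Ω_A (Λ D E R : M) (z : 𝕜) (hΛE : Commute Λ E) (hDE : Commute D E) :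
    (-(z⁻¹ • E) - (E * R - R * E)) * ((z ^ 2)⁻¹ • Λ + z⁻¹ • (Λ * R - R * Λ + D))
      - ((z ^ 2)⁻¹ • Λ + z⁻¹ • (Λ * R - R * Λ + D)) * (-(z⁻¹ • E) - (E * R - R * E))
    = z⁻¹ • ((Λ * R - R * Λ + D) * (E * R - R * E) - (E * R - R * E) * (Λ * R - R * Λ + D)) := by
  -- Jacobi identity: `[[Λ,R] + D, E] + [Λ,[E,R]] = [[Λ,E],R] + [D,E]`
  calc _ = z⁻¹ • ((Λ * R - R * Λ + D) * (E * R - R * E) - (E * R - R * E) * (Λ * R - R * Λ + D))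
        + (z⁻¹ * z⁻¹ * z⁻¹) • (Λ * E - E * Λ)
        + (z⁻¹ * z⁻¹) • ((Λ * E - E * Λ) * R + R * (E * Λ - Λ * E) + (D * E - E * D)) := by
        simp only [sq, mul_inv, neg_mul, mul_neg, sub_mul, mul_sub, add_mul, mul_add,
          smul_mul_assoc, mul_smul_comm, smul_smul, smul_add, smul_sub, smul_neg, mul_assoc]
        module
    _ = _ := by simp [hΛE.eq, hDE.eq]

theorem commutator_Ω_Ω (Ei Ej R : M) (z : 𝕜) (hE : Commute Ei Ej) :
    (-(z⁻¹ • Ei) - (Ei * R - R * Ei)) * (-(z⁻¹ • Ej) - (Ej * R - R * Ej))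
      - (-(z⁻¹ • Ej) - (Ej * R - R * Ej)) * (-(z⁻¹ • Ei) - (Ei * R - R * Ei))
    = (Ei * R - R * Ei) * (Ej * R - R * Ej) - (Ej * R - R * Ej) * (Ei * R - R * Ei) := by
  calc _ = (Ei * R - R * Ei) * (Ej * R - R * Ej) - (Ej * R - R * Ej) * (Ei * R - R * Ei)
        + (z⁻¹ * z⁻¹) • (Ei * Ej - Ej * Ei)
        + z⁻¹ • ((Ei * Ej - Ej * Ei) * R - R * (Ei * Ej - Ej * Ei)) := by
        simp only [neg_mul, mul_neg, sub_mul, mul_sub,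
          smul_mul_assoc, mul_smul_comm, smul_smul, smul_sub, smul_neg, mul_assoc]
        module
    _ = _ := by simp [hE.eq]

end Bracket

def EntrywiseDifferentiableAt {n : ℕ} (f : (Fin n → ℂ) → Matrix (Fin n) (Fin n) ℂ)
    (u : Fin n → ℂ) : Prop :=
  ∀ a b, DifferentiableAt ℂ (fun v => f v a b) u

namespace EntrywiseDifferentiableAt

variable {n : ℕ} {u : Fin n → ℂ} {f g : (Fin n → ℂ) → Matrix (Fin n) (Fin n) ℂ}

theorem add_const (hf : EntrywiseDifferentiableAt f u) (C : Matrix (Fin n) (Fin n) ℂ) :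
    EntrywiseDifferentiableAt (fun v => f v + C) u :=
  fun a b => (hf a b).add_const (C a b)

theorem sub (hf : EntrywiseDifferentiableAt f u) (hg : EntrywiseDifferentiableAt g u) :
    EntrywiseDifferentiableAt (fun v => f v - g v) u :=
  fun a b => (hf a b).sub (hg a b)

theorem const_smul (hf : EntrywiseDifferentiableAt f u) (c : ℂ) :
    EntrywiseDifferentiableAt (fun v => c • f v) u :=
  fun a b => (hf a b).const_mul c

theorem mul (hf : EntrywiseDifferentiableAt f u) (hg : EntrywiseDifferentiableAt g u) :
    EntrywiseDifferentiableAt (fun v => f v * g v) u := by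
  intro a b
  simp only [Matrix.mul_apply]
  exact DifferentiableAt.fun_sum fun k _ => (hf a k).mul (hg k b)

theorem diagonal : EntrywiseDifferentiableAt (Matrix.diagonal (n := Fin n)) u := by
  intro a b
  rcases eq_or_ne a b with rfl | hab
  · simpa using differentiableAt_apply a u
  · simp [Matrix.diagonal_apply_ne _ hab]

end EntrywiseDifferentiableAt

namespace matrixPderiv

variable {n : ℕ} {i : Fin n} {u : Fin n → ℂ} {f g : (Fin n → ℂ) → Matrix (Fin n) (Fin n) ℂ}

theorem add (hf : EntrywiseDifferentiableAt f u) (hg : EntrywiseDifferentiableAt g u) :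
    matrixPderiv i (fun v => f v + g v) u = matrixPderiv i f u + matrixPderiv i g u := by
  ext a b
  simp [matrixPderiv, fderiv_fun_add (hf a b) (hg a b)]

theorem add_const (C : Matrix (Fin n) (Fin n) ℂ) :
    matrixPderiv i (fun v => f v + C) u = matrixPderiv i f u := by
  ext a b
  simp [matrixPderiv, fderiv_add_const]

theorem const_sub (C : Matrix (Fin n) (Fin n) ℂ) :
    matrixPderiv i (fun v => C - f v) u = -matrixPderiv i f u := by
  ext a b
  simp [matrixPderiv, fderiv_const_sub]

theorem const_smul (c : ℂ) : matrixPderiv i (fun v => c • f v) u = c • matrixPderiv i f u := by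
  ext a b
  exact congr($(fderiv_const_smul_field (𝕜 := ℂ) (f := fun v => f v a b) c) u (Pi.single i 1))

theorem diagonal : matrixPderiv i Matrix.diagonal u = Matrix.single i i 1 := by
  ext a b
  rcases eq_or_ne a b with rfl | hab
  · simp [matrixPderiv, (hasFDerivAt_apply a u).fderiv, Matrix.single_apply, Pi.single_apply,
      eq_comm]
  · simp [matrixPderiv, Matrix.diagonal_apply_ne _ hab, Matrix.single_apply]
    grind

end matrixPderiv

theorem matrixZderiv_neg_inv_smul_sub {n : ℕ} (E C : Matrix (Fin n) (Fin n) ℂ) (z : ℂ) :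
    matrixZderiv (fun w => -(w⁻¹ • E) - C) z = (z ^ 2)⁻¹ • E := by
  ext a b
  simp [matrixZderiv]

section Connection

variable {n : ℕ} (R : (Fin n → ℂ) → Matrix (Fin n) (Fin n) ℂ) (D : Matrix (Fin n) (Fin n) ℂ)

noncomputable def connectionA (u : Fin n → ℂ) (z : ℂ) : Matrix (Fin n) (Fin n) ℂ :=
  (z ^ 2)⁻¹ • Matrix.diagonal u + z⁻¹ • ((Matrix.diagonal u * R u - R u * Matrix.diagonal u) + D)

noncomputable def connectionΩ (i : Fin n) (u : Fin n → ℂ) (z : ℂ) : Matrix (Fin n) (Fin n) ℂ :=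
  -(z⁻¹ • Matrix.single i i 1) - (Matrix.single i i 1 * R u - R u * Matrix.single i i 1)

variable {R D} {u : Fin n → ℂ}

theorem curvature_connectionA (hR : EntrywiseDifferentiableAt R u) (hD : D.IsDiag) (i : Fin n)
    (z : ℂ) :
    matrixPderiv i (fun v => connectionA R D v z) u
          - matrixZderiv (fun w => connectionΩ R i u w) z
        + connectionΩ R i u z * connectionA R D u z - connectionA R D u z * connectionΩ R i u z
      = z⁻¹ • (matrixPderiv i (fun v => Matrix.diagonal v * R v - R v * Matrix.diagonal v) u
          + ((Matrix.diagonal u * R u - R u * Matrix.diagonal u + D)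
              * (Matrix.single i i 1 * R u - R u * Matrix.single i i 1)
            - (Matrix.single i i 1 * R u - R u * Matrix.single i i 1)
              * (Matrix.diagonal u * R u - R u * Matrix.diagonal u + D))) := by
  have hΛ : EntrywiseDifferentiableAt (Matrix.diagonal (n := Fin n)) u :=
    EntrywiseDifferentiableAt.diagonal
  have hA : matrixPderiv i (fun v => connectionA R D v z) u
      = (z ^ 2)⁻¹ • Matrix.single i i 1
        + z⁻¹ • matrixPderiv i (fun v => Matrix.diagonal v * R v - R v * Matrix.diagonal v) u := by
    simp only [connectionA]
    rw [matrixPderiv.add (hΛ.const_smul _)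
      (((hΛ.mul hR).sub (hR.mul hΛ)).add_const D |>.const_smul _),
      matrixPderiv.const_smul, matrixPderiv.const_smul, matrixPderiv.add_const,
      matrixPderiv.diagonal]
  have hE : ∀ M : Matrix (Fin n) (Fin n) ℂ, M.IsDiag → Commute M (Matrix.single i i 1) := by
    intro M hM
    rw [← hM.diagonal_diag, ← Matrix.diagonal_single]
    exact Matrix.commute_diagonal _ _
  rw [hA]
  simp only [connectionΩ, connectionA]
  rw [matrixZderiv_neg_inv_smul_sub, add_sub_assoc,
    commutator_Ω_A _ _ _ _ z (hE _ (Matrix.isDiag_diagonal u)) (hE D hD), smul_add]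
  abel

theorem curvature_connectionΩ (i j : Fin n) (z : ℂ) :
    matrixPderiv i (fun v => connectionΩ R j v z) u
          - matrixPderiv j (fun v => connectionΩ R i v z) u
        + connectionΩ R i u z * connectionΩ R j u z - connectionΩ R j u z * connectionΩ R i u z
      = -(matrixPderiv i (fun v => Matrix.single j j 1 * R v - R v * Matrix.single j j 1) u
          - matrixPderiv j (fun v => Matrix.single i i 1 * R v - R v * Matrix.single i i 1) u)
        + ((Matrix.single i i 1 * R u - R u * Matrix.single i i 1)
            * (Matrix.single j j 1 * R u - R u * Matrix.single j j 1)
          - (Matrix.single j j 1 * R u - R u * Matrix.single j j 1)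
            * (Matrix.single i i 1 * R u - R u * Matrix.single i i 1)) := by
  have hE : Commute (Matrix.single i i (1 : ℂ)) (Matrix.single j j 1) := by
    rw [← Matrix.diagonal_single, ← Matrix.diagonal_single]
    exact Matrix.commute_diagonal _ _
  simp only [connectionΩ, matrixPderiv.const_sub]
  rw [add_sub_assoc, commutator_Ω_Ω _ _ _ z hE]
  abel

end Connection

theorem stmt6_general (n : ℕ)
    (U : Set (Fin n → ℂ)) (hUopen : IsOpen U)
    (R : (Fin n → ℂ) → Matrix (Fin n) (Fin n) ℂ)
    (hRholo : ∀ a b : Fin n, DifferentiableOn ℂ (fun u => R u a b) U)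
    (D : Matrix (Fin n) (Fin n) ℂ) (hD : D.IsDiag)
    (E : Fin n → Matrix (Fin n) (Fin n) ℂ)
    (hE : ∀ i, E i = Matrix.single i i (1 : ℂ))
    (A : (Fin n → ℂ) → ℂ → Matrix (Fin n) (Fin n) ℂ)
    (hA : ∀ u z, A u z = (z ^ 2)⁻¹ • Matrix.diagonal u
      + z⁻¹ • ((Matrix.diagonal u * R u - R u * Matrix.diagonal u) + D))
    (Ω : Fin n → (Fin n → ℂ) → ℂ → Matrix (Fin n) (Fin n) ℂ)
    (hΩ : ∀ i u z, Ω i u z = -(z⁻¹ • E i) - (E i * R u - R u * E i)) :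
    ((∀ i : Fin n, ∀ u ∈ U, ∀ z : ℂ, z ≠ 0 →
        matrixPderiv i (fun v => A v z) u - matrixZderiv (fun w => Ω i u w) z
          + Ω i u z * A u z - A u z * Ω i u z = 0) ∧
     (∀ i j : Fin n, ∀ u ∈ U, ∀ z : ℂ, z ≠ 0 →
        matrixPderiv i (fun v => Ω j v z) u - matrixPderiv j (fun v => Ω i v z) u
          + Ω i u z * Ω j u z - Ω j u z * Ω i u z = 0))
    ↔
    ((∀ i : Fin n, ∀ u ∈ U,
        matrixPderiv i
            (fun v => Matrix.diagonal v * R v - R v * Matrix.diagonal v) u =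
          -(((Matrix.diagonal u * R u - R u * Matrix.diagonal u) + D)
              * (E i * R u - R u * E i)
            - (E i * R u - R u * E i)
              * ((Matrix.diagonal u * R u - R u * Matrix.diagonal u) + D))) ∧
     (∀ i j : Fin n, ∀ u ∈ U,
        matrixPderiv i (fun v => E j * R v - R v * E j) u
          - matrixPderiv j (fun v => E i * R v - R v * E i) u =
        (E i * R u - R u * E i) * (E j * R u - R u * E j)
          - (E j * R u - R u * E j) * (E i * R u - R u * E i))) := by
  obtain rfl : E = fun i => Matrix.single i i 1 := funext hE
  obtain rfl : A = connectionA R D := funext₂ hA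
  obtain rfl : Ω = connectionΩ R := funext₃ hΩ
  have hR : ∀ u ∈ U, EntrywiseDifferentiableAt R u :=
    fun u hu a b => (hRholo a b).differentiableAt (hUopen.mem_nhds hu)
  refine and_congr (forall_congr' fun i => forall₂_congr fun u hu => ?_)
    (forall₂_congr fun i j => forall₂_congr fun u _ => ?_)
  · simp_rw [curvature_connectionA (hR u hu) hD, ← add_eq_zero_iff_eq_neg]
    exact ⟨fun h => by simpa using h 1 one_ne_zero, fun h z _ => by rw [h, smul_zero]⟩
  · simp_rw [curvature_connectionΩ, neg_add_eq_zero]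
    exact ⟨fun h => h 1 one_ne_zero, fun h _ _ => h⟩

/-- Flatness of the connection `-d(Λ(u)/z) + ([Λ(u),R(u)] + D) dz/z - [dΛ(u),R(u)]` is
equivalent to the isomonodromy differential system for `R`: with
`A(u,z) = Λ(u)/z² + ([Λ(u),R(u)] + D)/z` and `Ωᵢ(u,z) = -Eᵢ/z - [Eᵢ,R(u)]`, the
zero-curvature equations on `U × (ℂ ∖ {0})` hold iff
`∂ᵤᵢ[Λ,R] = -[[Λ,R] + D, [Eᵢ,R]]` and
`∂ᵤᵢ[E_j,R] - ∂ᵤⱼ[Eᵢ,R] = [[Eᵢ,R],[E_j,R]]` on `U`. -/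
theorem stmt6 (n : ℕ) (hn : 1 ≤ n)
    (U : Set (Fin n → ℂ)) (hUopen : IsOpen U)
    (R : (Fin n → ℂ) → Matrix (Fin n) (Fin n) ℂ)
    (hRholo : ∀ a b : Fin n, DifferentiableOn ℂ (fun u => R u a b) U)
    (hRdiag : ∀ u ∈ U, ∀ i : Fin n, R u i i = 0)
    (D : Matrix (Fin n) (Fin n) ℂ) (hD : D.IsDiag)
    (E : Fin n → Matrix (Fin n) (Fin n) ℂ)
    (hE : ∀ i, E i = Matrix.single i i (1 : ℂ))
    (A : (Fin n → ℂ) → ℂ → Matrix (Fin n) (Fin n) ℂ)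
    (hA : ∀ u z, A u z = (z ^ 2)⁻¹ • Matrix.diagonal u
      + z⁻¹ • ((Matrix.diagonal u * R u - R u * Matrix.diagonal u) + D))
    (Ω : Fin n → (Fin n → ℂ) → ℂ → Matrix (Fin n) (Fin n) ℂ)
    (hΩ : ∀ i u z, Ω i u z = -(z⁻¹ • E i) - (E i * R u - R u * E i)) :
    ((∀ i : Fin n, ∀ u ∈ U, ∀ z : ℂ, z ≠ 0 →
        matrixPderiv i (fun v => A v z) u - matrixZderiv (fun w => Ω i u w) z
          + Ω i u z * A u z - A u z * Ω i u z = 0) ∧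
     (∀ i j : Fin n, ∀ u ∈ U, ∀ z : ℂ, z ≠ 0 →
        matrixPderiv i (fun v => Ω j v z) u - matrixPderiv j (fun v => Ω i v z) u
          + Ω i u z * Ω j u z - Ω j u z * Ω i u z = 0))
    ↔
    ((∀ i : Fin n, ∀ u ∈ U,
        matrixPderiv i
            (fun v => Matrix.diagonal v * R v - R v * Matrix.diagonal v) u =
          -(((Matrix.diagonal u * R u - R u * Matrix.diagonal u) + D)
              * (E i * R u - R u * E i)
            - (E i * R u - R u * E i)
              * ((Matrix.diagonal u * R u - R u * Matrix.diagonal u) + D))) ∧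
     (∀ i j : Fin n, ∀ u ∈ U,
        matrixPderiv i (fun v => E j * R v - R v * E j) u
          - matrixPderiv j (fun v => E i * R v - R v * E i) u =
        (E i * R u - R u * E i) * (E j * R u - R u * E j)
          - (E j * R u - R u * E j) * (E i * R u - R u * E i))) :=
  stmt6_general n U hUopen R hRholo D hD E hE A hA Ω hΩ
end
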